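/- For any MV-algebra B, the relation ⊑ is a partial order on B: it is reflexive, transitive, and antisymmetric. -/
import Mathlib


/-- An MV-algebra: a commutative monoid `(B, ⊕, 0)` with an involution `¬`
satisfying `¬0 ⊕ x = ¬0` and the Łukasiewicz axiom
`¬(¬x ⊕ y) ⊕ y = ¬(¬y ⊕ x) ⊕ x`. -/
class MVAlgebra (B : Type*) where
  oplus : B → B → B
  mvneg : B → B
  zero : B
  oplus_assoc : ∀ x y z : B, oplus (oplus x y) z = oplus x (oplus y z)
  oplus_comm : ∀ x y : B, oplus x y = oplus y x
  oplus_zero : ∀ x : B, oplus x zero = x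
  mvneg_mvneg : ∀ x : B, mvneg (mvneg x) = x
  oplus_mvneg_zero : ∀ x : B, oplus (mvneg zero) x = mvneg zero
  luk : ∀ x y : B, oplus (mvneg (oplus (mvneg x) y)) y = oplus (mvneg (oplus (mvneg y) x)) x

namespace MVAlgebra

variable {B : Type*} [MVAlgebra B]

/-- `1 := ¬0`. -/
def one : B := mvneg zero

/-- `x ⊙ y := ¬(¬x ⊕ ¬y)`. -/
def odot (x y : B) : B := mvneg (oplus (mvneg x) (mvneg y))

/-- `x ⊖ y := x ⊙ ¬y`. -/
def ominus (x y : B) : B := odot x (mvneg y)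

/-- The natural order: `x ≤ y` iff `¬x ⊕ y = 1`. -/
def mvle (x y : B) : Prop := oplus (mvneg x) y = one

/-- Strict natural order. -/
def mvlt (x y : B) : Prop := mvle x y ∧ x ≠ y

/-- The transformation `x ↦ x_σ = (x ⊙ (x ⊕ x)) ⊕ (x ⊙ x)`. -/
def sigmaEl (x : B) : B := oplus (odot x (oplus x x)) (odot x x)

/-- An ideal: contains `0`, closed under `⊕`, downward closed for `≤`. -/
def IsIdeal (I : Set B) : Prop :=
  zero ∈ I ∧ (∀ x y : B, x ∈ I → y ∈ I → oplus x y ∈ I) ∧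
    (∀ x y : B, y ∈ I → mvle x y → x ∈ I)

/-- A prime ideal: a proper ideal `P` with `x ⊖ y ∈ P` or `y ⊖ x ∈ P` for all `x, y`. -/
def IsPrimeIdeal (P : Set B) : Prop :=
  IsIdeal P ∧ one ∉ P ∧ ∀ x y : B, ominus x y ∈ P ∨ ominus y x ∈ P

/-- `x ⊑ y` iff for every prime ideal `P`: if `¬y ⊖ y ∉ P` then `x ⊖ y ∈ P`,
and if `y ⊖ ¬y ∉ P` then `y ⊖ x ∈ P`. -/
def sqle (x y : B) : Prop :=
  ∀ P : Set B, IsPrimeIdeal P →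
    (ominus (mvneg y) y ∉ P → ominus x y ∈ P) ∧
    (ominus y (mvneg y) ∉ P → ominus y x ∈ P)

end MVAlgebra

open MVAlgebra


namespace MVAlgebra

variable {B : Type*} [MVAlgebra B]

/-! ### Basic arithmetic lemmas -/

theorem ocongr {a a' b b' : B} (h1 : a = a') (h2 : b = b') : oplus a b = oplus a' b' := by
  rw [h1, h2]

theorem zero_oplus (a : B) : oplus zero a = a := by rw [oplus_comm]; exact oplus_zero a

theorem one_oplus (a : B) : oplus one a = one := oplus_mvneg_zero a

theorem oplus_one (a : B) : oplus a one = one := by rw [oplus_comm]; exact one_oplus a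

theorem neg_one : (mvneg one : B) = zero := mvneg_mvneg zero

theorem neg_oplus_self (a : B) : oplus (mvneg a) a = one := by
  have h := luk a (one : B)
  simp only [oplus_one, neg_one, zero_oplus] at h
  exact h.symm

theorem oplus_neg_self (a : B) : oplus a (mvneg a) = one := by
  rw [oplus_comm]; exact neg_oplus_self a

theorem mvle_refl (a : B) : mvle a a := neg_oplus_self a

theorem ominus_def (a b : B) : ominus a b = mvneg (oplus (mvneg a) b) := by
  show mvneg (oplus (mvneg a) (mvneg (mvneg b))) = _
  rw [mvneg_mvneg]

theorem neg_ominus (a b : B) : mvneg (ominus a b) = oplus (mvneg a) b := by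
  rw [ominus_def, mvneg_mvneg]

theorem neg_inj {a b : B} (h : mvneg a = mvneg b) : a = b := by
  have := congrArg mvneg h
  rwa [mvneg_mvneg, mvneg_mvneg] at this

theorem ominus_self (a : B) : ominus a a = zero := by
  rw [ominus_def, neg_oplus_self]; exact neg_one

theorem mvle_iff_ominus_zero {a b : B} : mvle a b ↔ ominus a b = zero := by
  constructor
  · intro h; rw [ominus_def, h]; exact neg_one
  · intro h
    have := congrArg mvneg h
    rw [ominus_def, mvneg_mvneg] at this
    exact this

theorem ominus_zero_of_mvle {a b : B} (h : mvle a b) : ominus a b = zero :=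
  mvle_iff_ominus_zero.1 h

/-- The Łukasiewicz axiom in `⊖` form: `(a⊖b)⊕b = (b⊖a)⊕a`. -/
theorem luk' (a b : B) :
    oplus (ominus a b) b = oplus (ominus b a) a := by
  rw [ominus_def, ominus_def]; exact luk a b

theorem mvle_oplus_left (a c : B) : mvle a (oplus a c) := by
  show oplus (mvneg a) (oplus a c) = one
  rw [← oplus_assoc, neg_oplus_self, one_oplus]

theorem mvle_oplus_right (a c : B) : mvle a (oplus c a) := by
  rw [oplus_comm]; exact mvle_oplus_left a c

theorem mvle_of_eq_oplus {a b c : B} (h : b = oplus a c) : mvle a b := by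
  rw [h]; exact mvle_oplus_left a c

theorem eq_oplus_of_mvle {a b : B} (h : mvle a b) : b = oplus a (ominus b a) := by
  have h1 : oplus (ominus a b) b = b := by
    rw [ominus_zero_of_mvle h, zero_oplus]
  have h2 := luk' a b
  rw [h1] at h2
  rw [oplus_comm]
  exact h2

theorem mvle_trans {a b c : B} (hab : mvle a b) (hbc : mvle b c) : mvle a c := by
  obtain h1 := eq_oplus_of_mvle hab
  obtain h2 := eq_oplus_of_mvle hbc
  apply mvle_of_eq_oplus (c := oplus (ominus b a) (ominus c b))
  rw [← oplus_assoc, ← h1, ← h2]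

theorem mvle_antisymm {a b : B} (hab : mvle a b) (hba : mvle b a) : a = b := by
  have h := luk a b
  rw [(show oplus (mvneg a) b = one from hab), (show oplus (mvneg b) a = one from hba),
    neg_one, zero_oplus, zero_oplus] at h
  exact h.symm

theorem oplus_mvle_oplus_right {a b : B} (c : B) (h : mvle a b) :
    mvle (oplus a c) (oplus b c) := by
  obtain h1 := eq_oplus_of_mvle h
  apply mvle_of_eq_oplus (c := ominus b a)
  rw [oplus_comm a c, oplus_assoc, ← h1, oplus_comm c b]

theorem oplus_mvle_oplus_left {a b : B} (c : B) (h : mvle a b) :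
    mvle (oplus c a) (oplus c b) := by
  rw [oplus_comm c a, oplus_comm c b]; exact oplus_mvle_oplus_right c h

theorem oplus_mvle_oplus {a b a' b' : B} (h : mvle a b) (h' : mvle a' b') :
    mvle (oplus a a') (oplus b b') :=
  mvle_trans (oplus_mvle_oplus_right a' h) (oplus_mvle_oplus_left b h')

theorem mvneg_mvle_mvneg {a b : B} (h : mvle a b) : mvle (mvneg b) (mvneg a) := by
  show oplus (mvneg (mvneg b)) (mvneg a) = one
  rw [mvneg_mvneg, oplus_comm]
  exact h

theorem mvle_of_mvneg_mvle {a b : B} (h : mvle (mvneg b) (mvneg a)) : mvle a b := by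
  have := mvneg_mvle_mvneg h
  rwa [mvneg_mvneg, mvneg_mvneg] at this

theorem zero_mvle (a : B) : mvle zero a := by
  show oplus (mvneg zero) a = one
  exact one_oplus a

theorem mvle_one (a : B) : mvle a one := oplus_one (mvneg a)

theorem eq_zero_of_mvle_zero {a : B} (h : mvle a zero) : a = zero :=
  mvle_antisymm h (zero_mvle a)

/-- Residuation: `a ⊖ b ≤ z ↔ a ≤ b ⊕ z`. -/
theorem residuation {a b z : B} : mvle (ominus a b) z ↔ mvle a (oplus b z) := by
  show oplus (mvneg (ominus a b)) z = one ↔ oplus (mvneg a) (oplus b z) = one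
  rw [neg_ominus, oplus_assoc]

theorem mvle_oplus_ominus (a b : B) : mvle a (oplus b (ominus a b)) :=
  residuation.1 (mvle_refl _)

theorem ominus_mvle_self (a b : B) : mvle (ominus a b) a :=
  residuation.2 (mvle_oplus_right a b)

theorem ominus_mvle_ominus_right {a b : B} (c : B) (h : mvle a b) :
    mvle (ominus a c) (ominus b c) := by
  rw [ominus_def, ominus_def]
  apply mvneg_mvle_mvneg
  exact oplus_mvle_oplus_right c (mvneg_mvle_mvneg h)

theorem ominus_mvle_ominus_left {a b : B} (c : B) (h : mvle a b) :
    mvle (ominus c b) (ominus c a) := by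
  rw [ominus_def, ominus_def]
  apply mvneg_mvle_mvneg
  exact oplus_mvle_oplus_left (mvneg c) h

theorem mvle_neg_of_ominus_zero {a b : B} (h : ominus a (mvneg b) = zero) : mvle a (mvneg b) :=
  mvle_iff_ominus_zero.2 h

/-- `sup a b = (a⊖b)⊕b` is an upper bound for `b`. -/
theorem mvle_sup_right (a b : B) : mvle b (oplus (ominus a b) b) := mvle_oplus_right b _

theorem mvle_sup_left (a b : B) : mvle a (oplus (ominus a b) b) := by
  rw [luk']; exact mvle_oplus_right a _

theorem sup_mvle {a b c : B} (hac : mvle a c) (hbc : mvle b c) :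
    mvle (oplus (ominus a b) b) c := by
  have h1 : mvle (oplus (ominus a b) b) (oplus (ominus c b) b) :=
    oplus_mvle_oplus_right b (ominus_mvle_ominus_right b hac)
  have h2 : oplus (ominus c b) b = c := by
    rw [luk', ominus_zero_of_mvle hbc, zero_oplus]
  rw [h2] at h1
  exact h1

theorem neg_oplus_eq_ominus (a b : B) : mvneg (oplus a b) = ominus (mvneg a) b := by
  rw [ominus_def, mvneg_mvneg]

end MVAlgebra

namespace MVAlgebra
variable {B : Type*} [MVAlgebra B]

set_option maxHeartbeats 2000000 in
theorem luk_magic (x y : B) :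
    oplus (mvneg (mvneg (oplus (mvneg x) y))) (mvneg (oplus (mvneg y) x))
      = mvneg (mvneg (oplus (mvneg x) y)) := by
  have h0 : (mvneg zero) = (oplus x (mvneg zero)) := ((oplus_mvneg_zero x).symm).trans ((oplus_comm x (mvneg zero)).symm)
  have h1 : x = (mvneg (mvneg x)) := (mvneg_mvneg x).symm
  have h2 : (oplus x (mvneg zero)) = (oplus (mvneg (mvneg x)) (oplus x (mvneg zero))) := ocongr h1 h0
  have h3 : zero = (mvneg (oplus (mvneg (mvneg x)) (oplus x (mvneg zero)))) := (((mvneg_mvneg zero).symm).trans (congrArg mvneg h0)).trans (congrArg mvneg h2)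
  have h4 : (mvneg (oplus x (mvneg zero))) = zero := (congrArg mvneg h0.symm).trans (mvneg_mvneg zero)
  have h5 : (oplus (mvneg (oplus x (mvneg zero))) (mvneg x)) = (oplus (mvneg x) zero) := (ocongr h4 rfl).trans ((oplus_comm (mvneg x) zero).symm)
  have h6 : (oplus (mvneg x) zero) = (mvneg x) := oplus_zero (mvneg x)
  have h7 : (mvneg (oplus (mvneg (oplus x (mvneg zero))) (mvneg x))) = x := ((congrArg mvneg h5).trans (congrArg mvneg h6)).trans (mvneg_mvneg x)
  have h8 : (oplus x (mvneg zero)) = (oplus x (mvneg x)) := ((((((oplus_comm x (mvneg zero)).trans (oplus_mvneg_zero x)).trans ((oplus_zero (mvneg zero)).symm)).trans ((oplus_comm zero (mvneg zero)).symm)).trans (ocongr h3 h0)).trans ((luk (oplus x (mvneg zero)) (mvneg x)).symm)).trans (ocongr h7 rfl)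
  have h9 : (mvneg zero) = (oplus (mvneg x) x) := ((((((oplus_zero (mvneg zero)).symm).trans ((oplus_comm zero (mvneg zero)).symm)).trans (ocongr h3 h0)).trans ((luk (oplus x (mvneg zero)) (mvneg x)).symm)).trans (ocongr h7 rfl)).trans (oplus_comm x (mvneg x))
  have h10 : (oplus y (mvneg x)) = (oplus (mvneg x) y) := (oplus_comm (mvneg x) y).symm
  have h11 : (oplus y x) = (oplus x y) := (oplus_comm x y).symm
  have h12 : (oplus y (mvneg x)) = (mvneg (mvneg (oplus (mvneg x) y))) := ((oplus_comm (mvneg x) y).symm).trans ((mvneg_mvneg (oplus (mvneg x) y)).symm)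
  have h13 : x = (mvneg (oplus (mvneg x) zero)) := ((mvneg_mvneg x).symm).trans (congrArg mvneg h6.symm)
  have h14 : (oplus x (mvneg x)) = (oplus (mvneg (oplus (mvneg x) zero)) (mvneg (mvneg (oplus (mvneg x) y)))) := (((((((((((((((ocongr h7.symm rfl).trans (luk (oplus x (mvneg zero)) (mvneg x))).trans (ocongr h3.symm h0.symm)).trans (oplus_comm zero (mvneg zero))).trans (oplus_zero (mvneg zero))).trans ((oplus_mvneg_zero y).symm)).trans ((oplus_comm y (mvneg zero)).symm)).trans (ocongr rfl h9)).trans ((oplus_assoc y (mvneg x) x).symm)).trans (ocongr h10 rfl)).trans (oplus_assoc (mvneg x) y x)).trans (ocongr rfl h11)).trans (oplus_comm (mvneg x) (oplus x y))).trans (oplus_assoc x y (mvneg x))).trans (ocongr rfl h12)).trans (ocongr h13 rfl)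
  have h15 : zero = (mvneg (oplus (mvneg (oplus (mvneg x) zero)) (mvneg (mvneg (oplus (mvneg x) y))))) := ((((mvneg_mvneg zero).symm).trans (congrArg mvneg h0)).trans (congrArg mvneg h8)).trans (congrArg mvneg h14)
  have h16 : (mvneg (mvneg (oplus (mvneg x) y))) = (oplus (mvneg (oplus (mvneg (mvneg (mvneg (oplus (mvneg x) y)))) (oplus (mvneg x) zero))) (oplus (mvneg x) zero)) := ((((oplus_zero (mvneg (mvneg (oplus (mvneg x) y)))).symm).trans (oplus_comm (mvneg (mvneg (oplus (mvneg x) y))) zero)).trans (ocongr h15 rfl)).trans (luk (oplus (mvneg x) zero) (mvneg (mvneg (oplus (mvneg x) y))))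
  have h17 : (mvneg (mvneg (mvneg (oplus (mvneg x) y)))) = (mvneg (oplus (mvneg x) y)) := mvneg_mvneg (mvneg (oplus (mvneg x) y))
  have h18 : (oplus (mvneg (mvneg (mvneg (oplus (mvneg x) y)))) (oplus (mvneg x) zero)) = (oplus (mvneg x) (mvneg (oplus (mvneg x) y))) := (ocongr h17 h6).trans ((oplus_comm (mvneg x) (mvneg (oplus (mvneg x) y))).symm)
  have h19 : (mvneg y) = (oplus (mvneg y) zero) := (oplus_zero (mvneg y)).symm
  have h20 : y = (mvneg (oplus (mvneg y) zero)) := ((mvneg_mvneg y).symm).trans (congrArg mvneg h19)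
  have h21 : (oplus (mvneg x) y) = (oplus (mvneg (oplus (mvneg y) zero)) (mvneg x)) := (oplus_comm (mvneg x) y).trans (ocongr h20 rfl)
  have h22 : (mvneg (oplus (mvneg x) y)) = (mvneg (oplus (mvneg (oplus (mvneg y) zero)) (mvneg x))) := congrArg mvneg h21
  have h23 : (oplus (mvneg (mvneg x)) (oplus (mvneg y) zero)) = (oplus x (mvneg y)) := ocongr h1.symm h19.symm
  have h24 : (oplus x (mvneg y)) = (oplus (mvneg y) x) := oplus_comm x (mvneg y)
  have h25 : (mvneg (oplus (mvneg (mvneg x)) (oplus (mvneg y) zero))) = (mvneg (oplus (mvneg y) x)) := (congrArg mvneg h23).trans (congrArg mvneg h24)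
  have h26 : (oplus (mvneg x) (mvneg (oplus (mvneg x) y))) = (oplus (mvneg y) (mvneg (oplus (mvneg y) x))) := ((((oplus_comm (mvneg x) (mvneg (oplus (mvneg x) y))).trans (ocongr h22 rfl)).trans (luk (oplus (mvneg y) zero) (mvneg x))).trans (ocongr h25 h19.symm)).trans ((oplus_comm (mvneg y) (mvneg (oplus (mvneg y) x))).symm)
  have h27 : (mvneg (oplus (mvneg (mvneg (mvneg (oplus (mvneg x) y)))) (oplus (mvneg x) zero))) = (mvneg (oplus (mvneg y) (mvneg (oplus (mvneg y) x)))) := (congrArg mvneg h18).trans (congrArg mvneg h26)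
  have h28 : (oplus (oplus (mvneg x) zero) (mvneg (oplus (mvneg y) x))) = (oplus (mvneg (oplus (mvneg y) x)) (mvneg x)) := (ocongr h6 rfl).trans (oplus_comm (mvneg x) (mvneg (oplus (mvneg y) x)))
  have h29 : (oplus (mvneg (mvneg (oplus (mvneg y) x))) y) = (oplus y (mvneg (mvneg (oplus (mvneg y) x)))) := (oplus_comm y (mvneg (mvneg (oplus (mvneg y) x)))).symm
  have h30 : y = (oplus zero y) := ((oplus_zero y).symm).trans (oplus_comm y zero)
  have h31 : (oplus zero (mvneg (mvneg (oplus (mvneg y) x)))) = (oplus x (mvneg y)) := ((((oplus_comm (mvneg (mvneg (oplus (mvneg y) x))) zero).symm).trans (oplus_zero (mvneg (mvneg (oplus (mvneg y) x))))).trans (mvneg_mvneg (oplus (mvneg y) x))).trans ((oplus_comm x (mvneg y)).symm)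
  have h32 : (oplus y (mvneg (mvneg (oplus (mvneg y) x)))) = (oplus x (oplus y (mvneg y))) := ((((((((ocongr h30 rfl).trans (oplus_assoc zero y (mvneg (mvneg (oplus (mvneg y) x))))).trans (ocongr rfl h29.symm)).trans ((oplus_assoc zero (mvneg (mvneg (oplus (mvneg y) x))) y).symm)).trans (ocongr h31 rfl)).trans (ocongr h24 rfl)).trans (oplus_assoc (mvneg y) x y)).trans (oplus_comm (mvneg y) (oplus x y))).trans (oplus_assoc x y (mvneg y))
  have h33 : (oplus (mvneg y) zero) = (oplus (mvneg (oplus x (mvneg zero))) (mvneg y)) := (oplus_comm (mvneg y) zero).trans (ocongr h4.symm rfl)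
  have h34 : y = (mvneg (oplus (mvneg (oplus x (mvneg zero))) (mvneg y))) := (((mvneg_mvneg y).symm).trans (congrArg mvneg h19)).trans (congrArg mvneg h33)
  have h35 : (mvneg (mvneg y)) = y := mvneg_mvneg y
  have h36 : (oplus (mvneg (mvneg y)) (oplus x (mvneg zero))) = (oplus x (mvneg zero)) := ((((ocongr h35 h0.symm).trans (oplus_comm y (mvneg zero))).trans (oplus_mvneg_zero y)).trans ((oplus_mvneg_zero x).symm)).trans ((oplus_comm x (mvneg zero)).symm)
  have h37 : (mvneg (oplus (mvneg (mvneg y)) (oplus x (mvneg zero)))) = zero := ((congrArg mvneg h36).trans (congrArg mvneg h0.symm)).trans (mvneg_mvneg zero)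
  have h38 : (mvneg x) = (oplus zero (mvneg x)) := ((oplus_zero (mvneg x)).symm).trans (oplus_comm (mvneg x) zero)
  have h39 : (mvneg zero) = (oplus y (mvneg y)) := (((((oplus_zero (mvneg zero)).symm).trans ((oplus_comm zero (mvneg zero)).symm)).trans (ocongr h37.symm h0)).trans ((luk (oplus x (mvneg zero)) (mvneg y)).symm)).trans (ocongr h34.symm rfl)
  have h40 : (oplus y (mvneg y)) = (oplus (mvneg y) y) := oplus_comm y (mvneg y)
  have h41 : (oplus (mvneg x) (mvneg y)) = (oplus zero (mvneg (mvneg (oplus (mvneg x) (mvneg y))))) := (((mvneg_mvneg (oplus (mvneg x) (mvneg y))).symm).trans ((oplus_zero (mvneg (mvneg (oplus (mvneg x) (mvneg y))))).symm)).trans (oplus_comm (mvneg (mvneg (oplus (mvneg x) (mvneg y)))) zero)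
  have h42 : (oplus (mvneg (mvneg (oplus (mvneg x) (mvneg y)))) y) = (oplus y (mvneg (mvneg (oplus (mvneg x) (mvneg y))))) := (oplus_comm y (mvneg (mvneg (oplus (mvneg x) (mvneg y))))).symm
  have h43 : (oplus (mvneg x) (oplus y (mvneg y))) = (oplus y (mvneg (mvneg (oplus (mvneg x) (mvneg y))))) := ((((((ocongr rfl h40).trans ((oplus_assoc (mvneg x) (mvneg y) y).symm)).trans (ocongr h41 rfl)).trans (oplus_assoc zero (mvneg (mvneg (oplus (mvneg x) (mvneg y)))) y)).trans (ocongr rfl h42)).trans ((oplus_assoc zero y (mvneg (mvneg (oplus (mvneg x) (mvneg y))))).symm)).trans (ocongr h30.symm rfl)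
  have h44 : (oplus (oplus y (mvneg y)) zero) = (oplus (oplus y (mvneg y)) (mvneg x)) := (((((((((((((((((((oplus_comm zero (oplus y (mvneg y))).symm).trans ((oplus_assoc zero y (mvneg y)).symm)).trans (ocongr h30.symm rfl)).trans (ocongr h34 rfl)).trans (luk (oplus x (mvneg zero)) (mvneg y))).trans (ocongr h37 h0.symm)).trans (oplus_comm zero (mvneg zero))).trans (oplus_zero (mvneg zero))).trans ((oplus_mvneg_zero (mvneg x)).symm)).trans ((oplus_comm (mvneg x) (mvneg zero)).symm)).trans (ocongr h38 h39)).trans (oplus_assoc zero (mvneg x) (oplus y (mvneg y)))).trans (ocongr rfl h43)).trans (ocongr rfl h42.symm)).trans ((oplus_assoc zero (mvneg (mvneg (oplus (mvneg x) (mvneg y)))) y).symm)).trans (ocongr h41.symm rfl)).trans (oplus_assoc (mvneg x) (mvneg y) y)).trans (ocongr rfl h40.symm)).trans (oplus_comm (mvneg x) (oplus y (mvneg y)))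
  have h45 : (oplus (mvneg x) y) = (mvneg (mvneg (oplus (mvneg x) y))) := (mvneg_mvneg (oplus (mvneg x) y)).symm
  have h46 : (mvneg (mvneg (oplus (mvneg y) x))) = (oplus (mvneg y) x) := mvneg_mvneg (oplus (mvneg y) x)
  have h47 : (oplus (mvneg (mvneg (oplus (mvneg x) y))) (mvneg y)) = (oplus x (mvneg zero)) := (((((((((((((ocongr h45.symm rfl).trans (oplus_assoc (mvneg x) y (mvneg y))).trans (ocongr rfl h40)).trans ((oplus_assoc (mvneg x) (mvneg y) y).symm)).trans (ocongr h41 rfl)).trans (oplus_assoc zero (mvneg (mvneg (oplus (mvneg x) (mvneg y)))) y)).trans (ocongr rfl h42)).trans (ocongr rfl h43.symm)).trans ((oplus_assoc zero (mvneg x) (oplus y (mvneg y))).symm)).trans (ocongr h38.symm h39.symm)).trans (oplus_comm (mvneg x) (mvneg zero))).trans (oplus_mvneg_zero (mvneg x))).trans ((oplus_mvneg_zero x).symm)).trans ((oplus_comm x (mvneg zero)).symm)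
  have h48 : (oplus (mvneg zero) x) = (oplus y (mvneg zero)) := ((oplus_mvneg_zero x).trans ((oplus_mvneg_zero y).symm)).trans ((oplus_comm y (mvneg zero)).symm)
  have h49 : (oplus (mvneg zero) x) = (oplus (mvneg x) (mvneg zero)) := ((oplus_mvneg_zero x).trans ((oplus_mvneg_zero (mvneg x)).symm)).trans ((oplus_comm (mvneg x) (mvneg zero)).symm)
  have h50 : (oplus y (mvneg (mvneg (oplus (mvneg y) x)))) = (oplus x (mvneg x)) := (((((((((((((((((((((((((((((((ocongr h30 rfl).trans (oplus_assoc zero y (mvneg (mvneg (oplus (mvneg y) x))))).trans (oplus_comm zero (oplus y (mvneg (mvneg (oplus (mvneg y) x)))))).trans (ocongr h32 rfl)).trans (oplus_assoc x (oplus y (mvneg y)) zero)).trans (ocongr rfl h44)).trans ((oplus_assoc x (oplus y (mvneg y)) (mvneg x)).symm)).trans (ocongr h32.symm rfl)).trans ((oplus_comm (mvneg x) (oplus y (mvneg (mvneg (oplus (mvneg y) x))))).symm)).trans ((oplus_assoc (mvneg x) y (mvneg (mvneg (oplus (mvneg y) x)))).symm)).trans (ocongr h45 rfl)).trans (oplus_comm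 (mvneg (mvneg (oplus (mvneg x) y))) (mvneg (mvneg (oplus (mvneg y) x))))).trans (ocongr h46 rfl)).trans (oplus_assoc (mvneg y) x (mvneg (mvneg (oplus (mvneg x) y))))).trans (oplus_comm (mvneg y) (oplus x (mvneg (mvneg (oplus (mvneg x) y)))))).trans (oplus_assoc x (mvneg (mvneg (oplus (mvneg x) y))) (mvneg y))).trans (ocongr rfl h47)).trans ((oplus_assoc x x (mvneg zero)).symm)).trans ((oplus_comm (mvneg zero) (oplus x x)).symm)).trans ((oplus_assoc (mvneg zero) x x).symm)).trans (ocongr h48 rfl)).trans (oplus_assoc y (mvneg zero) x)).trans (ocongr rfl h49)).trans ((oplus_assoc y (mvneg x) (mvneg zero)).symm)).trans (ocongr h12 rfl)).trans (oplus_comm (mvneg (mvneg (oplus (mvneg x) y))) (mvneg zero))).trans (oplus_mvneg_zero (mvneg (mvneg (oplus (mvneg x) y))))).trans ((oplus_zero (mvneg zero)).symm)).trans ((oplus_comm zero (mvneg zero)).symm)).trans (ocongr h3 h0)).trans ((luk (oplus x (mvneg zero)) (mvneg x)).symm)).trans (ocongr h7 rfl)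
  have h51 : (mvneg (oplus (mvneg (mvneg (oplus (mvneg y) x))) y)) = zero := ((((congrArg mvneg h29).trans (congrArg mvneg h50)).trans (congrArg mvneg h8.symm)).trans (congrArg mvneg h0.symm)).trans (mvneg_mvneg zero)
  have h52 : (oplus (mvneg (oplus (mvneg y) (mvneg (oplus (mvneg y) x)))) (mvneg (oplus (mvneg y) x))) = y := ((((luk (mvneg (oplus (mvneg y) x)) y).symm).trans (ocongr h51 rfl)).trans ((oplus_comm y zero).symm)).trans (oplus_zero y)
  have h53 : (oplus (mvneg (mvneg (oplus (mvneg x) y))) (mvneg (oplus (mvneg y) x))) = (mvneg (mvneg (oplus (mvneg x) y))) := ((((((ocongr h16 rfl).trans (oplus_assoc (mvneg (oplus (mvneg (mvneg (mvneg (oplus (mvneg x) y)))) (oplus (mvneg x) zero))) (oplus (mvneg x) zero) (mvneg (oplus (mvneg y) x)))).trans (ocongr h27 h28)).trans ((oplus_assoc (mvneg (oplus (mvneg y) (mvneg (oplus (mvneg y) x)))) (mvneg (oplus (mvneg y) x)) (mvneg x)).symm)).trans (ocongr h52 rfl)).trans ((oplus_comm (mvneg x) y).symm)).trans ((mvneg_mvneg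 (oplus (mvneg x) y)).symm)
  exact h53

end MVAlgebra

namespace MVAlgebra

variable {B : Type*} [MVAlgebra B]

/-- Cancellation: if `w ≤ ¬u` then `u ≤ (u ⊕ w) ⊖ w`. -/
theorem Qge {u w : B} (h : mvle w (mvneg u)) : mvle u (ominus (oplus u w) w) := by
  apply mvle_of_mvneg_mvle
  rw [neg_ominus, neg_oplus_eq_ominus]
  exact sup_mvle (mvle_refl _) h

/-- Infimum. -/
def minf (a b : B) : B := ominus a (ominus a b)

theorem minf_def (a b : B) : minf a b = ominus a (ominus a b) := rfl

theorem minf_mvle_left (a b : B) : mvle (minf a b) a := ominus_mvle_self _ _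

theorem minf_mvle_right (a b : B) : mvle (minf a b) b :=
  residuation.2 (mvle_sup_left a b)

theorem mvle_minf {z a b : B} (ha : mvle z a) (hb : mvle z b) : mvle z (minf a b) := by
  have hw : mvle (ominus a z) (mvneg z) :=
    residuation.2 (by rw [oplus_neg_self]; exact mvle_one a)
  have hQ := Qge hw
  rw [← eq_oplus_of_mvle ha] at hQ
  have h2 : mvle (ominus a b) (ominus a z) := ominus_mvle_ominus_left a hb
  have h3 : mvle (ominus a (ominus a z)) (ominus a (ominus a b)) :=
    ominus_mvle_ominus_left a h2
  exact mvle_trans hQ h3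

theorem minf_comm (a b : B) : minf a b = minf b a :=
  mvle_antisymm
    (mvle_minf (minf_mvle_right a b) (minf_mvle_left a b))
    (mvle_minf (minf_mvle_right b a) (minf_mvle_left b a))

theorem minf_zero (b : B) : minf zero b = zero :=
  eq_zero_of_mvle_zero (minf_mvle_left zero b)

/-- Distributivity: `c ⊕ (a ∧ b) = (c ⊕ a) ∧ (c ⊕ b)`. -/
theorem oplus_minf (c a b : B) :
    oplus c (minf a b) = minf (oplus c a) (oplus c b) := by
  apply mvle_antisymm
  · exact mvle_minf (oplus_mvle_oplus_left c (minf_mvle_left a b))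
      (oplus_mvle_oplus_left c (minf_mvle_right a b))
  · set w := minf (oplus c a) (oplus c b) with hw
    have h1 : mvle (ominus w c) a := residuation.2 (minf_mvle_left _ _)
    have h2 : mvle (ominus w c) b := residuation.2 (minf_mvle_right _ _)
    have h4 : mvle w (oplus c (ominus w c)) := residuation.1 (mvle_refl _)
    exact mvle_trans h4 (oplus_mvle_oplus_left c (mvle_minf h1 h2))

/-- `(u ⊕ v) ∧ w ≤ u ⊕ (v ∧ w)`. -/
theorem minf_oplus_mvle (u v w : B) :
    mvle (minf (oplus u v) w) (oplus u (minf v w)) := by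
  set s := minf (oplus u v) w with hs
  have h1 : mvle (ominus s u) v := residuation.2 (minf_mvle_left _ _)
  have h2 : mvle (ominus s u) w :=
    mvle_trans (ominus_mvle_self s u) (minf_mvle_right _ _)
  have h4 : mvle s (oplus u (ominus s u)) := residuation.1 (mvle_refl _)
  exact mvle_trans h4 (oplus_mvle_oplus_left u (mvle_minf h1 h2))

/-- Medial law: `u ∧ (v ⊕ w) ≤ (u ∧ v) ⊕ (u ∧ w)`. -/
theorem medial (u v w : B) :
    mvle (minf u (oplus v w)) (oplus (minf u v) (minf u w)) := by
  have e1 : oplus (minf u v) (minf u w)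
      = minf (minf (oplus u u) (oplus u v)) (minf (oplus w u) (oplus w v)) := by
    rw [oplus_minf (minf u v) u w, oplus_comm (minf u v) u, oplus_minf u u v,
      oplus_comm (minf u v) w, oplus_minf w u v]
  rw [e1]
  have hu : mvle (minf u (oplus v w)) u := minf_mvle_left _ _
  exact mvle_minf
    (mvle_minf (mvle_trans hu (mvle_oplus_left u u)) (mvle_trans hu (mvle_oplus_left u v)))
    (mvle_minf (mvle_trans hu (mvle_oplus_right u w))
      (mvle_trans (minf_mvle_right u (oplus v w)) (by rw [oplus_comm v w]; exact mvle_refl _)))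

end MVAlgebra

namespace MVAlgebra

variable {B : Type*} [MVAlgebra B]

/-- The hub identity: `(x⊖y) ⊖ (y⊖x) = x⊖y`. -/
theorem ominus_ominus_self (x y : B) :
    ominus (ominus x y) (ominus y x) = ominus x y := by
  have hm := luk_magic x y
  calc ominus (ominus x y) (ominus y x)
      = mvneg (oplus (mvneg (ominus x y)) (ominus y x)) := ominus_def _ _
    _ = mvneg (oplus (mvneg (mvneg (oplus (mvneg x) y))) (mvneg (oplus (mvneg y) x))) := by
        rw [ominus_def x y, ominus_def y x]
    _ = mvneg (mvneg (mvneg (oplus (mvneg x) y))) := by rw [hm]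
    _ = mvneg (oplus (mvneg x) y) := by rw [mvneg_mvneg]
    _ = ominus x y := (ominus_def x y).symm

/-- `(x ⊖ y) ∧ (y ⊖ x) = 0`. -/
theorem minf_ominus (x y : B) : minf (ominus x y) (ominus y x) = zero := by
  rw [minf_def, ominus_ominus_self, ominus_self]

/-- `n`-fold sum. -/
def nfold : ℕ → B → B
  | 0, _ => zero
  | n+1, a => oplus (nfold n a) a

theorem nfold_add (n m : ℕ) (a : B) :
    nfold (n + m) a = oplus (nfold n a) (nfold m a) := by
  induction m with
  | zero => show nfold n a = _; rw [nfold, oplus_zero]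
  | succ m ih =>
      show oplus (nfold (n+m) a) a = _
      rw [ih, oplus_assoc]
      rfl

theorem minf_nfold_zero {a b : B} (h : minf a b = zero) :
    ∀ n, minf (nfold n a) b = zero
  | 0 => minf_zero b
  | n+1 => by
      have hm := medial b (nfold n a) a
      rw [minf_comm b (nfold n a), minf_nfold_zero h n, zero_oplus, minf_comm b a, h] at hm
      have := eq_zero_of_mvle_zero hm
      rw [minf_comm] at this
      exact this

theorem minf_nfold_nfold_zero {a b : B} (h : minf a b = zero) (n m : ℕ) :
    minf (nfold n a) (nfold m b) = zero := by
  have h1 : minf (nfold n a) b = zero := minf_nfold_zero h n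
  rw [minf_comm] at h1
  have h2 := minf_nfold_zero h1 m
  rw [minf_comm] at h2
  exact h2

/-! ### Ideals -/

theorem ideal_mem_of_mvle {I : Set B} (hI : IsIdeal I) {a b : B}
    (hb : b ∈ I) (h : mvle a b) : a ∈ I := hI.2.2 a b hb h

theorem ideal_oplus_mem {I : Set B} (hI : IsIdeal I) {a b : B}
    (ha : a ∈ I) (hb : b ∈ I) : oplus a b ∈ I := hI.2.1 a b ha hb

/-- Ideal generated by `I` and an element `t`. -/
def genId (I : Set B) (t : B) : Set B :=
  {u | ∃ p ∈ I, ∃ n : ℕ, mvle u (oplus p (nfold n t))}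

theorem mem_genId_self {I : Set B} (hI : IsIdeal I) (t : B) : t ∈ genId I t := by
  refine ⟨zero, hI.1, 1, ?_⟩
  show mvle t (oplus zero (oplus (nfold 0 t) t))
  rw [show nfold 0 t = (zero : B) from rfl, zero_oplus, zero_oplus]
  exact mvle_refl t

theorem subset_genId {I : Set B} (t : B) (hI : IsIdeal I) : I ⊆ genId I t := by
  intro u hu
  exact ⟨u, hu, 0, by rw [show nfold 0 t = (zero : B) from rfl, oplus_zero]; exact mvle_refl u⟩

theorem genId_isIdeal {I : Set B} (hI : IsIdeal I) (t : B) : IsIdeal (genId I t) := by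
  refine ⟨subset_genId t hI hI.1, ?_, ?_⟩
  · rintro a b ⟨p, hp, n, hn⟩ ⟨q, hq, m, hm⟩
    refine ⟨oplus p q, ideal_oplus_mem hI hp hq, n + m, ?_⟩
    have h1 : mvle (oplus a b) (oplus (oplus p (nfold n t)) (oplus q (nfold m t))) :=
      oplus_mvle_oplus hn hm
    have h2 : oplus (oplus p (nfold n t)) (oplus q (nfold m t))
        = oplus (oplus p q) (nfold (n+m) t) := by
      rw [nfold_add, oplus_assoc, ← oplus_assoc (nfold n t) q (nfold m t),
        oplus_comm (nfold n t) q, oplus_assoc q (nfold n t) (nfold m t), ← oplus_assoc]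
    rw [h2] at h1
    exact h1
  · rintro a b ⟨p, hp, n, hn⟩ h
    exact ⟨p, hp, n, mvle_trans h hn⟩

/-- Key step: a maximal ideal avoiding `z` is prime. -/
theorem maximal_isPrime {P : Set B} {z : B} (hP : IsIdeal P) (hz : z ∉ P)
    (hmax : ∀ I : Set B, IsIdeal I → z ∉ I → P ⊆ I → I ⊆ P) :
    IsPrimeIdeal P := by
  refine ⟨hP, fun hone => hz (ideal_mem_of_mvle hP hone (mvle_one z)), ?_⟩
  intro x y
  by_contra hcon
  push_neg at hcon
  obtain ⟨hc, hd⟩ := hcon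
  -- z belongs to both generated ideals
  have hzc : z ∈ genId P (ominus x y) := by
    by_contra hzc
    exact hc (hmax _ (genId_isIdeal hP _) hzc (subset_genId _ hP) (mem_genId_self hP _))
  have hzd : z ∈ genId P (ominus y x) := by
    by_contra hzd
    exact hd (hmax _ (genId_isIdeal hP _) hzd (subset_genId _ hP) (mem_genId_self hP _))
  obtain ⟨p, hp, n, hn⟩ := hzc
  obtain ⟨q, hq, m, hm⟩ := hzd
  set A := nfold n (ominus x y) with hA
  set C := nfold m (ominus y x) with hC
  have hAC : minf A C = zero := minf_nfold_nfold_zero (minf_ominus x y) n m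
  -- z ≤ (p ⊕ A) ∧ (q ⊕ C) ≤ p ⊕ (A ∧ (q ⊕ C)) ≤ p ⊕ (q ⊕ (A ∧ C)) = p ⊕ q
  have h1 : mvle z (minf (oplus p A) (oplus q C)) := mvle_minf hn hm
  have h2 : mvle (minf (oplus p A) (oplus q C)) (oplus p (minf A (oplus q C))) :=
    minf_oplus_mvle p A (oplus q C)
  have h3 : mvle (minf A (oplus q C)) (oplus q (minf C A)) := by
    have := minf_oplus_mvle q C A
    rw [minf_comm A (oplus q C)]
    exact this
  have h4 : oplus q (minf C A) = q := by rw [minf_comm, hAC, oplus_zero]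
  rw [h4] at h3
  have h5 : mvle z (oplus p q) :=
    mvle_trans h1 (mvle_trans h2 (oplus_mvle_oplus_left p h3))
  exact hz (ideal_mem_of_mvle hP (ideal_oplus_mem hP hp hq) h5)

/-- Separation: every nonzero element avoids some prime ideal. -/
theorem exists_prime_not_mem {z : B} (hz : z ≠ zero) :
    ∃ P : Set B, IsPrimeIdeal P ∧ z ∉ P := by
  classical
  set S : Set (Set B) := {I | IsIdeal I ∧ z ∉ I} with hS
  have h0 : ({zero} : Set B) ∈ S := by
    refine ⟨⟨rfl, ?_, ?_⟩, ?_⟩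
    · rintro a b (rfl : a = zero) (rfl : b = zero)
      show oplus zero zero = zero
      rw [oplus_zero]
    · rintro a b (rfl : b = zero) h
      exact eq_zero_of_mvle_zero h
    · intro h
      exact hz h
  have hchain : ∀ c ⊆ S, IsChain (· ⊆ ·) c → c.Nonempty → ∃ ub ∈ S, ∀ s ∈ c, s ⊆ ub := by
    intro c hc hchain ⟨I₀, hI₀⟩
    refine ⟨⋃₀ c, ⟨⟨Set.mem_sUnion.2 ⟨I₀, hI₀, (hc hI₀).1.1⟩, ?_, ?_⟩, ?_⟩,
      fun s hs => Set.subset_sUnion_of_mem hs⟩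
    · rintro a b ha hb
      obtain ⟨I, hI, haI⟩ := ha
      obtain ⟨J, hJ, hbJ⟩ := hb
      rcases hchain.total hI hJ with h | h
      · exact ⟨J, hJ, ideal_oplus_mem (hc hJ).1 (h haI) hbJ⟩
      · exact ⟨I, hI, ideal_oplus_mem (hc hI).1 haI (h hbJ)⟩
    · rintro a b hb h
      obtain ⟨I, hI, hbI⟩ := hb
      exact ⟨I, hI, ideal_mem_of_mvle (hc hI).1 hbI h⟩
    · intro hzu
      obtain ⟨I, hI, hzI⟩ := hzu
      exact (hc hI).2 hzI
  obtain ⟨M, _, hM⟩ := zorn_subset_nonempty S hchain _ h0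
  refine ⟨M, maximal_isPrime hM.prop.1 hM.prop.2 ?_, hM.prop.2⟩
  intro I hI hzI hPI
  exact (hM.eq_of_subset ⟨hI, hzI⟩ hPI).ge

end MVAlgebra

namespace MVAlgebra

variable {B : Type*} [MVAlgebra B]

/-- Triangle inequality: `a ⊖ c ≤ (a ⊖ b) ⊕ (b ⊖ c)`. -/
theorem triangle (a b c : B) :
    mvle (ominus a c) (oplus (ominus a b) (ominus b c)) := by
  apply residuation.2
  have h1 : mvle a (oplus b (ominus a b)) := mvle_oplus_ominus a b
  have h2 : mvle (oplus b (ominus a b)) (oplus (oplus c (ominus b c)) (ominus a b)) :=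
    oplus_mvle_oplus_right _ (mvle_oplus_ominus b c)
  have h3 : oplus (oplus c (ominus b c)) (ominus a b)
      = oplus c (oplus (ominus a b) (ominus b c)) := by
    rw [oplus_assoc, oplus_comm (ominus b c) (ominus a b)]
  rw [h3] at h2
  exact mvle_trans h1 h2

theorem ominus_neg_neg (a b : B) : ominus (mvneg a) (mvneg b) = ominus b a := by
  rw [ominus_def, mvneg_mvneg, oplus_comm, ← ominus_def]

theorem zero_mem_prime {P : Set B} (hP : IsPrimeIdeal P) : (zero : B) ∈ P := hP.1.1

end MVAlgebra

open MVAlgebra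

theorem sqle_partialOrder' {B : Type*} [MVAlgebra B] :
    (∀ x : B, sqle x x) ∧
    (∀ x y z : B, sqle x y → sqle y z → sqle x z) ∧
    (∀ x y : B, sqle x y → sqle y x → x = y) := by
  classical
  refine ⟨?_, ?_, ?_⟩
  · -- reflexivity
    intro x P hP
    have h0 : ominus x x ∈ P := by rw [ominus_self]; exact zero_mem_prime hP
    exact ⟨fun _ => h0, fun _ => h0⟩
  · -- transitivity
    intro x y z hxy hyz P hP
    obtain ⟨hxy1, hxy2⟩ := hxy P hP
    obtain ⟨hyz1, hyz2⟩ := hyz P hP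
    constructor
    · intro hnz
      have hyzP : ominus y z ∈ P := hyz1 hnz
      have hny : ominus (mvneg y) y ∉ P := by
        intro hmem
        apply hnz
        have t1 := triangle (mvneg z) (mvneg y) z
        rw [ominus_neg_neg] at t1
        have t2 := triangle (mvneg y) y z
        have hle : mvle (ominus (mvneg z) z)
            (oplus (ominus y z) (oplus (ominus (mvneg y) y) (ominus y z))) :=
          mvle_trans t1 (oplus_mvle_oplus_left _ t2)
        exact ideal_mem_of_mvle hP.1
          (ideal_oplus_mem hP.1 hyzP (ideal_oplus_mem hP.1 hmem hyzP)) hle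
      have hxyP : ominus x y ∈ P := hxy1 hny
      exact ideal_mem_of_mvle hP.1 (ideal_oplus_mem hP.1 hxyP hyzP) (triangle x y z)
    · intro hzz
      have hzyP : ominus z y ∈ P := hyz2 hzz
      have hyy : ominus y (mvneg y) ∉ P := by
        intro hmem
        apply hzz
        have t1 := triangle z y (mvneg z)
        have t2 := triangle y (mvneg y) (mvneg z)
        rw [ominus_neg_neg] at t2
        have hle : mvle (ominus z (mvneg z))
            (oplus (ominus z y) (oplus (ominus y (mvneg y)) (ominus z y))) :=
          mvle_trans t1 (oplus_mvle_oplus_left _ t2)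
        exact ideal_mem_of_mvle hP.1
          (ideal_oplus_mem hP.1 hzyP (ideal_oplus_mem hP.1 hmem hzyP)) hle
      have hyxP : ominus y x ∈ P := hxy2 hyy
      exact ideal_mem_of_mvle hP.1 (ideal_oplus_mem hP.1 hzyP hyxP) (triangle z y x)
  · -- antisymmetry
    intro x y hxy hyx
    have key : ∀ x y : B, sqle x y → sqle y x →
        ∀ P : Set B, IsPrimeIdeal P → ominus x y ∈ P := by
      intro x y hxy hyx P hP
      by_cases h1 : ominus (mvneg y) y ∈ P
      · by_cases h2 : ominus x (mvneg x) ∈ P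
        · rcases hP.2.2 x y with h | h
          · exact h
          · have t1 := triangle x (mvneg x) y
            have t2 := triangle (mvneg x) (mvneg y) y
            rw [ominus_neg_neg] at t2
            have hle : mvle (ominus x y)
                (oplus (ominus x (mvneg x)) (oplus (ominus y x) (ominus (mvneg y) y))) :=
              mvle_trans t1 (oplus_mvle_oplus_left _ t2)
            exact ideal_mem_of_mvle hP.1
              (ideal_oplus_mem hP.1 h2 (ideal_oplus_mem hP.1 h h1)) hle
        · exact (hyx P hP).2 h2
      · exact (hxy P hP).1 h1
    have hxy0 : ominus x y = zero := by
      by_contra hne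
      obtain ⟨P, hP, hnot⟩ := exists_prime_not_mem hne
      exact hnot (key x y hxy hyx P hP)
    have hyx0 : ominus y x = zero := by
      by_contra hne
      obtain ⟨P, hP, hnot⟩ := exists_prime_not_mem hne
      exact hnot (key y x hyx hxy P hP)
    exact mvle_antisymm (mvle_iff_ominus_zero.2 hxy0) (mvle_iff_ominus_zero.2 hyx0)

/-- for any MV-algebra `B`, the relation `⊑` is a partial order:
reflexive, transitive, and antisymmetric. -/
theorem sqle_partialOrder {B : Type*} [MVAlgebra B] :
    (∀ x : B, sqle x x) ∧
    (∀ x y z : B, sqle x y → sqle y z → sqle x z) ∧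
    (∀ x y : B, sqle x y → sqle y x → x = y) :=
  sqle_partialOrder'
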